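/- (Jackson q-beta integral) For 0 < q < 1 and Re b > 0, Re(c-b) > 0: ∫_0^1 t^{b-1} (tq;q)_∞/(tq^{c-b};q)_∞ d_q t = Γ_q(b)Γ_q(c-b)/Γ_q(c). -/

import Mathlib

/-!
Put `z = q^b` and `a = q^(c-b)`, so that `a z = q^c`. Splitting off the first `n` factors,
`(x;q)_∞ = (x;q)_n (x q^n;q)_∞`, turns the Jackson sum into
`(q;q)_∞ / (a;q)_∞ · ∑ (a;q)_n / (q;q)_n · z^n`, and the `q`-binomial theorem sums the series to
`(a z;q)_∞ / (z;q)_∞`; this is `Γ_q(b) Γ_q(c-b) / Γ_q(c)` after the powers of `1 - q` cancel.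

For the `q`-binomial theorem, the recurrence `(1 - q^(n+1)) c_(n+1) = (1 - a q^n) c_n` of the
coefficients gives the functional equation `(1 - z) S(z) = (1 - a z) S(q z)` of their generating
function `S`. Iterating it, `S(z) (z;q)_N = (a z;q)_N S(q^N z)`, and `S(q^N z) → S(0) = 1`, since the
coefficients are bounded (they converge to `(a;q)_∞ / (q;q)_∞`).
-/

/-- The infinite q-Pochhammer symbol `(a;q)_∞ = ∏_{k≥0} (1 - a q^k)`. -/
noncomputable def qPochInf (q a : ℂ) : ℂ := ∏' k : ℕ, (1 - a * q ^ k)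

/-- The q-gamma function `Γ_q(z) = ((q;q)_∞ / (q^z;q)_∞) (1-q)^{1-z}`. -/
noncomputable def qGamma (q : ℝ) (z : ℂ) : ℂ :=
  qPochInf q (q : ℂ) / qPochInf q (Complex.exp (z * Real.log q)) *
    ((1 - q : ℂ)) ^ ((1 : ℂ) - z)

open Finset Filter Topology

noncomputable def qPoch (q a : ℂ) (n : ℕ) : ℂ := ∏ k ∈ range n, (1 - a * q ^ k)

noncomputable def qBinomialCoeff (q a : ℂ) (n : ℕ) : ℂ := qPoch q a n / qPoch q q n

noncomputable def qBinomialSeries (q a z : ℂ) : ℂ := ∑' n, qBinomialCoeff q a n * z ^ n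

section PowerSeries

variable {u : ℕ → ℂ} {C : ℝ}

lemma summable_mul_pow_of_norm_le (hu : ∀ n, ‖u n‖ ≤ C) {z : ℂ} (hz : ‖z‖ < 1) :
    Summable fun n ↦ u n * z ^ n :=
  .of_norm_bounded ((summable_geometric_of_lt_one (norm_nonneg z) hz).mul_left C) fun n ↦ by
    rw [norm_mul, norm_pow]
    exact mul_le_mul_of_nonneg_right (hu n) (by positivity)

lemma one_sub_mul_mul_tsum_mul_pow {z : ℂ} (hs : Summable fun n ↦ u n * z ^ n) (b : ℂ) :
    (1 - b * z) * ∑' n, u n * z ^ n = u 0 + ∑' n, (u (n + 1) - b * u n) * z ^ (n + 1) := by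
  have hs' : Summable fun n ↦ u (n + 1) * z ^ (n + 1) := (summable_nat_add_iff 1).mpr hs
  have hsplit := hs.tsum_eq_zero_add
  simp only [pow_zero, mul_one] at hsplit
  have : ∑' n, (u (n + 1) - b * u n) * z ^ (n + 1)
      = ∑' n, u (n + 1) * z ^ (n + 1) - b * z * ∑' n, u n * z ^ n := by
    rw [← tsum_mul_left, ← hs'.tsum_sub (hs.mul_left (b * z))]
    exact tsum_congr fun n ↦ by ring
  rw [this, hsplit]
  ring

lemma tendsto_tsum_mul_pow_nhds_zero (hu : ∀ n, ‖u n‖ ≤ C) :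
    Tendsto (fun z ↦ ∑' n, u n * z ^ n) (𝓝 0) (𝓝 (u 0)) := by
  have hlim : Tendsto (fun z ↦ ∑' n, u n * z ^ n) (𝓝 0) (𝓝 (∑' n, u n * 0 ^ n)) := by
    refine tendsto_tsum_of_dominated_convergence
      (summable_geometric_two.mul_left C) (fun n ↦ ?_) ?_
    · exact ((continuous_pow n).const_mul (u n)).tendsto 0
    · filter_upwards [Metric.closedBall_mem_nhds (0 : ℂ) (by norm_num : (0 : ℝ) < 1 / 2)]
        with z hz n
      rw [mem_closedBall_zero_iff] at hz
      rw [norm_mul, norm_pow]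
      exact mul_le_mul (hu n) (pow_le_pow_left₀ (norm_nonneg z) hz n) (by positivity)
        ((norm_nonneg _).trans (hu n))
  rwa [tsum_eq_single 0 fun n hn ↦ by simp [hn], pow_zero, mul_one] at hlim

end PowerSeries

section QPochhammer

lemma qPoch_succ (q a : ℂ) (n : ℕ) : qPoch q a (n + 1) = qPoch q a n * (1 - a * q ^ n) :=
  prod_range_succ _ n

variable {q : ℂ} (hq : ‖q‖ < 1)
include hq

lemma summable_norm_mul_pow (a : ℂ) : Summable fun k : ℕ ↦ ‖a * q ^ k‖ := by
  simpa [norm_mul, norm_pow] using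
    (summable_geometric_of_lt_one (norm_nonneg q) hq).mul_left ‖a‖

lemma multipliable_one_sub_mul_pow (a : ℂ) : Multipliable fun k : ℕ ↦ 1 - a * q ^ k := by
  simpa [sub_eq_add_neg] using
    multipliable_one_add_of_summable (f := fun k ↦ -(a * q ^ k)) (by
      simpa using summable_norm_mul_pow hq a)

lemma tendsto_qPoch (a : ℂ) : Tendsto (qPoch q a) atTop (𝓝 (qPochInf q a)) :=
  (multipliable_one_sub_mul_pow hq a).hasProd.tendsto_prod_nat

lemma one_sub_mul_pow_ne_zero {a : ℂ} (ha : ‖a‖ < 1) (k : ℕ) : 1 - a * q ^ k ≠ 0 := by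
  refine sub_ne_zero.mpr fun h ↦ ?_
  have : ‖a * q ^ k‖ < 1 := by
    rw [norm_mul, norm_pow]
    exact mul_lt_one_of_nonneg_of_lt_one_left (norm_nonneg a) ha
      (pow_le_one₀ (norm_nonneg q) hq.le)
  simp [← h] at this

lemma qPoch_ne_zero {a : ℂ} (ha : ‖a‖ < 1) (n : ℕ) : qPoch q a n ≠ 0 :=
  prod_ne_zero_iff.mpr fun k _ ↦ one_sub_mul_pow_ne_zero hq ha k

lemma qPochInf_ne_zero {a : ℂ} (ha : ‖a‖ < 1) : qPochInf q a ≠ 0 := by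
  simpa [qPochInf, sub_eq_add_neg] using
    tprod_one_add_ne_zero_of_summable (f := fun k ↦ -(a * q ^ k))
      (by simpa [← sub_eq_add_neg] using one_sub_mul_pow_ne_zero hq ha)
      (by simpa using summable_norm_mul_pow hq a)

lemma qPoch_mul_qPochInf_pow_mul (a : ℂ) (n : ℕ) :
    qPoch q a n * qPochInf q (q ^ n * a) = qPochInf q a := by
  have hshift (k : ℕ) : 1 - q ^ n * a * q ^ k = 1 - a * q ^ (k + n) := by ring
  rw [qPochInf, tprod_congr hshift]
  exact Multipliable.prod_mul_tprod_nat_mul' (f := fun k ↦ 1 - a * q ^ k)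
    ((multipliable_one_sub_mul_pow hq (q ^ n * a)).congr hshift)

end QPochhammer

section QBinomial

variable {q : ℂ} (hq : ‖q‖ < 1)

@[simp]
lemma qBinomialCoeff_zero (q a : ℂ) : qBinomialCoeff q a 0 = 1 := by
  simp [qBinomialCoeff, qPoch]

include hq

lemma qBinomialCoeff_succ_mul (a : ℂ) (n : ℕ) :
    qBinomialCoeff q a (n + 1) * (1 - q ^ (n + 1)) = qBinomialCoeff q a n * (1 - a * q ^ n) := by
  rw [qBinomialCoeff, qBinomialCoeff, qPoch_succ, qPoch_succ, pow_succ', mul_div_mul_comm,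
    mul_assoc, div_mul_cancel₀ _ (one_sub_mul_pow_ne_zero hq hq n)]

lemma exists_norm_qBinomialCoeff_le (a : ℂ) : ∃ C, ∀ n, ‖qBinomialCoeff q a n‖ ≤ C := by
  have hlim := (tendsto_qPoch hq a).div (tendsto_qPoch hq q) (qPochInf_ne_zero hq hq)
  obtain ⟨C, hC⟩ := isBounded_iff_forall_norm_le.mp (Metric.isBounded_range_of_tendsto _ hlim)
  exact ⟨C, fun n ↦ hC _ ⟨n, rfl⟩⟩

lemma summable_qBinomialCoeff_mul_pow (a : ℂ) {z : ℂ} (hz : ‖z‖ < 1) :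
    Summable fun n ↦ qBinomialCoeff q a n * z ^ n :=
  let ⟨_, hC⟩ := exists_norm_qBinomialCoeff_le hq a
  summable_mul_pow_of_norm_le hC hz

lemma one_sub_mul_qBinomialSeries (a : ℂ) {z : ℂ} (hz : ‖z‖ < 1) :
    (1 - z) * qBinomialSeries q a z = (1 - a * z) * qBinomialSeries q a (q * z) := by
  have hqz : qBinomialSeries q a (q * z) = ∑' n, (qBinomialCoeff q a n * q ^ n) * z ^ n :=
    tsum_congr fun n ↦ by ring
  have hs := summable_qBinomialCoeff_mul_pow hq a hz
  have hs' : Summable fun n ↦ (qBinomialCoeff q a n * q ^ n) * z ^ n := by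
    simpa only [hqz, mul_pow, mul_assoc] using summable_qBinomialCoeff_mul_pow hq a (z := q * z)
      (by simpa using mul_lt_one_of_nonneg_of_lt_one_left (norm_nonneg q) hq hz.le)
  have hlhs := one_sub_mul_mul_tsum_mul_pow hs 1
  rw [one_mul] at hlhs
  rw [hqz, one_sub_mul_mul_tsum_mul_pow hs' a, qBinomialSeries, hlhs]
  refine congrArg₂ _ (by simp) (tsum_congr fun n ↦ ?_)
  linear_combination (z ^ (n + 1)) * qBinomialCoeff_succ_mul hq a n

lemma qBinomialSeries_mul_qPoch (a : ℂ) {z : ℂ} (hz : ‖z‖ < 1) (N : ℕ) :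
    qBinomialSeries q a z * qPoch q z N = qPoch q (a * z) N * qBinomialSeries q a (q ^ N * z) := by
  induction N with
  | zero => simp [qPoch]
  | succ N ih =>
    have hqNz : ‖q ^ N * z‖ < 1 := by
      simpa using mul_lt_one_of_nonneg_of_lt_one_right (pow_le_one₀ (norm_nonneg q) hq.le)
        (norm_nonneg z) hz
    have hstep := one_sub_mul_qBinomialSeries hq a hqNz
    rw [← mul_assoc q, ← pow_succ'] at hstep
    rw [qPoch_succ, qPoch_succ]
    linear_combination (1 - z * q ^ N) * ih + qPoch q (a * z) N * hstep

lemma tendsto_qBinomialSeries_pow_mul (a z : ℂ) :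
    Tendsto (fun N ↦ qBinomialSeries q a (q ^ N * z)) atTop (𝓝 1) := by
  obtain ⟨C, hC⟩ := exists_norm_qBinomialCoeff_le hq a
  have hzero : Tendsto (fun N ↦ q ^ N * z) atTop (𝓝 0) := by
    simpa using (tendsto_pow_atTop_nhds_zero_of_norm_lt_one hq).mul_const z
  have h := (tendsto_tsum_mul_pow_nhds_zero hC).comp hzero
  rwa [qBinomialCoeff_zero] at h

/-- The `q`-binomial theorem. -/
theorem qBinomialSeries_eq (a : ℂ) {z : ℂ} (hz : ‖z‖ < 1) :
    qBinomialSeries q a z = qPochInf q (a * z) / qPochInf q z := by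
  rw [eq_div_iff (qPochInf_ne_zero hq hz)]
  refine tendsto_nhds_unique ((tendsto_qPoch hq z).const_mul _) ?_
  simpa using ((tendsto_qPoch hq (a * z)).mul (tendsto_qBinomialSeries_pow_mul hq a z)).congr
    fun N ↦ (qBinomialSeries_mul_qPoch hq a hz N).symm

lemma qPochInf_pow_mul_div_qPochInf_pow_mul {a : ℂ} (ha : ‖a‖ < 1) (n : ℕ) :
    qPochInf q (q ^ n * q) / qPochInf q (q ^ n * a)
      = qPochInf q q / qPochInf q a * qBinomialCoeff q a n := by
  have hqna : ‖q ^ n * a‖ < 1 := by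
    simpa using mul_lt_one_of_nonneg_of_lt_one_right (pow_le_one₀ (norm_nonneg q) hq.le)
      (norm_nonneg a) ha
  have hQ := qPochInf_ne_zero hq hqna
  have hPq := qPoch_ne_zero hq hq n
  have hPa := qPoch_ne_zero hq ha n
  rw [← qPoch_mul_qPochInf_pow_mul hq q n, ← qPoch_mul_qPochInf_pow_mul hq a n, qBinomialCoeff]
  field_simp

end QBinomial

section RealBase

variable {q : ℝ} (hq0 : 0 < q)
include hq0

lemma norm_cexp_mul_log_lt_one (hq1 : q < 1) {s : ℂ} (hs : 0 < s.re) :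
    ‖Complex.exp (s * Real.log q)‖ < 1 := by
  rw [Complex.norm_exp, Real.exp_lt_one_iff, Complex.re_mul_ofReal]
  exact mul_neg_of_pos_of_neg hs (Real.log_neg hq0 hq1)

lemma ofReal_pow_mul_cexp_mul_log_pow (s : ℂ) (n : ℕ) :
    (q : ℂ) ^ n * Complex.exp ((s - 1) * Real.log (q ^ n)) = Complex.exp (s * Real.log q) ^ n := by
  have hq : (q : ℂ) = Complex.exp (Real.log q) := by
    rw [← Complex.ofReal_exp, Real.exp_log hq0]
  rw [Real.log_pow, hq, ← Complex.exp_nat_mul, ← Complex.exp_nat_mul, ← Complex.exp_add]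
  congr 1
  push_cast
  ring

lemma qGamma_mul_qGamma_div_qGamma (hq1 : q < 1) (b c : ℂ) :
    qGamma q b * qGamma q (c - b) / qGamma q c
      = (1 - q) * (qPochInf q q / qPochInf q (Complex.exp ((c - b) * Real.log q)) *
        (qPochInf q (Complex.exp (c * Real.log q)) / qPochInf q (Complex.exp (b * Real.log q)))) := by
  have hq : ‖(q : ℂ)‖ < 1 := by simpa [abs_of_pos hq0] using hq1
  have hbase : (1 - q : ℂ) ≠ 0 := by
    rw [sub_ne_zero]; exact_mod_cast hq1.ne'
  have hpow : (1 - q : ℂ) ^ (1 - b) * (1 - q : ℂ) ^ (1 - (c - b))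
      = (1 - q) * (1 - q : ℂ) ^ (1 - c) := by
    rw [← Complex.cpow_add _ _ hbase, show 1 - b + (1 - (c - b)) = 1 + (1 - c) by ring,
      Complex.cpow_add _ _ hbase, Complex.cpow_one]
  have hQq := qPochInf_ne_zero hq hq
  have hpow_ne : (1 - q : ℂ) ^ (1 - c) ≠ 0 := Complex.cpow_ne_zero_iff.mpr (Or.inl hbase)
  simp only [qGamma]
  field_simp
  rw [hpow]
  ring

end RealBase

/-- Jackson q-beta integral: for `0 < q < 1`, `Re b > 0`, `Re(c-b) > 0`,
`∫_0^1 t^{b-1} (tq;q)_∞/(tq^{c-b};q)_∞ d_q t = Γ_q(b)Γ_q(c-b)/Γ_q(c)`. -/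
theorem jackson_q_beta (q : ℝ) (hq0 : 0 < q) (hq1 : q < 1)
    (b c : ℂ) (hb : 0 < b.re) (hcb : 0 < (c - b).re) :
    (1 - (q : ℂ)) * ∑' n : ℕ, (q : ℂ) ^ n *
        (Complex.exp ((b - 1) * Real.log (q ^ n)) *
          qPochInf q ((q : ℂ) ^ n * (q : ℂ)) /
          qPochInf q ((q : ℂ) ^ n * Complex.exp ((c - b) * Real.log q)))
      = qGamma q b * qGamma q (c - b) / qGamma q c := by
  have hq : ‖(q : ℂ)‖ < 1 := by simpa [abs_of_pos hq0] using hq1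
  set a := Complex.exp ((c - b) * Real.log q)
  set z := Complex.exp (b * Real.log q)
  have ha : ‖a‖ < 1 := norm_cexp_mul_log_lt_one hq0 hq1 hcb
  have haz : a * z = Complex.exp (c * Real.log q) := by
    rw [← Complex.exp_add]
    congr 1
    ring
  have hterm (n : ℕ) : (q : ℂ) ^ n * (Complex.exp ((b - 1) * Real.log (q ^ n)) *
        qPochInf q ((q : ℂ) ^ n * q) / qPochInf q ((q : ℂ) ^ n * a))
      = qPochInf q q / qPochInf q a * (qBinomialCoeff q a n * z ^ n) := by
    rw [mul_div_assoc, ← mul_assoc, ofReal_pow_mul_cexp_mul_log_pow hq0,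
      qPochInf_pow_mul_div_qPochInf_pow_mul hq ha]
    ring
  rw [tsum_congr hterm, tsum_mul_left, ← qBinomialSeries,
    qBinomialSeries_eq hq a (norm_cexp_mul_log_lt_one hq0 hq1 hb), haz,
    qGamma_mul_qGamma_div_qGamma hq0 hq1]
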